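/- The operator A_{N,X} is symmetric and positive definite with respect to the Frobenius inner product on d×d matrices, for any invertible X. -/

import Mathlib

/-!
Each summand of `A_{N,X}` is `P ↦ L P E` with `L = Q_N D Q_Nᵀ` and `E = Q_0 D' Q_0ᵀ` symmetric,
so it is self-adjoint for `⟨A, B⟩ = Tr(AᵀB)`. Writing `M = Q_Nᵀ P Q_0`, its quadratic form is
`∑ i j, D j * D' i * M j i ^ 2`, which is positive when `D, D' > 0` and `M ≠ 0`, and `M ≠ 0`
whenever `P ≠ 0` because `Q_N` and `Q_0` are orthogonal.
-/

open Matrix Real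

/-- The operator `A_{N,X}(P) = Σ_{p=1}^N (XXᵀ)^{(N-p)/N} P (XᵀX)^{(p-1)/N}` for
`X = Q_N Σ Q_0ᵀ`, with fractional powers defined spectrally:
`(XXᵀ)^s = Q_N Σ^{2s} Q_Nᵀ` and `(XᵀX)^s = Q_0 Σ^{2s} Q_0ᵀ`. -/
noncomputable def dlnA (d N : ℕ) (QN Q0 : Matrix (Fin d) (Fin d) ℝ) (σ : Fin d → ℝ)
    (P : Matrix (Fin d) (Fin d) ℝ) : Matrix (Fin d) (Fin d) ℝ :=
  ∑ p ∈ Finset.range N,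
    (QN * Matrix.diagonal (fun i => (σ i) ^ ((2 * ((N : ℝ) - ((p : ℝ) + 1))) / N)) * QNᵀ) *
      P *
    (Q0 * Matrix.diagonal (fun i => (σ i) ^ ((2 * (p : ℝ)) / N)) * Q0ᵀ)

namespace Matrix

variable {n α : Type*} [Fintype n]

theorem trace_transpose_mul_mul_mul_of_isSymm [CommSemiring α] {L E : Matrix n n α}
    (hL : L.IsSymm) (hE : E.IsSymm) (P R : Matrix n n α) :
    trace (Pᵀ * (L * R * E)) = trace ((L * P * E)ᵀ * R) := by
  rw [transpose_mul, transpose_mul, hL.eq, hE.eq, ← Matrix.mul_assoc Pᵀ, trace_mul_comm]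
  simp only [Matrix.mul_assoc]

variable [DecidableEq n]

section CommSemiring

variable [CommSemiring α]

theorem isSymm_mul_diagonal_mul_transpose (Q : Matrix n n α) (D : n → α) :
    (Q * diagonal D * Qᵀ).IsSymm := by
  simp only [IsSymm, transpose_mul, transpose_transpose, (isSymm_diagonal D).eq, Matrix.mul_assoc]

theorem trace_transpose_mul_conj_diagonal (Q Q' P : Matrix n n α) (D E : n → α) :
    trace (Pᵀ * ((Q * diagonal D * Qᵀ) * P * (Q' * diagonal E * Q'ᵀ))) =
      trace ((Qᵀ * P * Q')ᵀ * (diagonal D * (Qᵀ * P * Q') * diagonal E)) := by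
  rw [show Pᵀ * ((Q * diagonal D * Qᵀ) * P * (Q' * diagonal E * Q'ᵀ)) =
      (Pᵀ * Q) * (diagonal D * (Qᵀ * P * Q') * diagonal E) * Q'ᵀ by simp only [Matrix.mul_assoc],
    trace_mul_cycle]
  simp only [transpose_mul, transpose_transpose, Matrix.mul_assoc]

theorem trace_transpose_mul_diagonal_mul_mul_diagonal (M : Matrix n n α) (D E : n → α) :
    trace (Mᵀ * (diagonal D * M * diagonal E)) = ∑ i, ∑ j, D j * E i * M j i ^ 2 := by
  simp only [trace, diag, mul_apply (M := Mᵀ), transpose_apply, mul_diagonal, diagonal_mul]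
  refine Finset.sum_congr rfl fun i _ => Finset.sum_congr rfl fun j _ => ?_
  ring

end CommSemiring

theorem trace_transpose_mul_diagonal_mul_mul_diagonal_pos [CommRing α] [LinearOrder α]
    [IsStrictOrderedRing α] {M : Matrix n n α} (hM : M ≠ 0) {D E : n → α}
    (hD : ∀ i, 0 < D i) (hE : ∀ i, 0 < E i) :
    0 < trace (Mᵀ * (diagonal D * M * diagonal E)) := by
  obtain ⟨j, i, hji⟩ : ∃ j i, M j i ≠ 0 := by
    by_contra! h
    exact hM (ext h)
  have hterm : ∀ a b, 0 ≤ D b * E a * M b a ^ 2 := fun a b => by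
    have := hD b; have := hE a; positivity
  rw [trace_transpose_mul_diagonal_mul_mul_diagonal]
  calc 0 < D j * E i * M j i ^ 2 := by have := hD j; have := hE i; positivity
    _ ≤ ∑ b, D b * E i * M b i ^ 2 :=
      Finset.single_le_sum (fun b _ => hterm i b) (Finset.mem_univ j)
    _ ≤ ∑ a, ∑ b, D b * E a * M b a ^ 2 :=
      Finset.single_le_sum (f := fun a => ∑ b, D b * E a * M b a ^ 2)
        (fun a _ => Finset.sum_nonneg fun b _ => hterm a b) (Finset.mem_univ i)

theorem transpose_mul_mul_ne_zero [CommRing α] {Q Q' P : Matrix n n α} (hQ : Qᵀ * Q = 1)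
    (hQ' : Q'ᵀ * Q' = 1) (hP : P ≠ 0) : Qᵀ * P * Q' ≠ 0 := by
  intro h
  apply hP
  calc P = (Q * Qᵀ) * P * (Q' * Q'ᵀ) := by
        rw [mul_eq_one_comm.mp hQ, mul_eq_one_comm.mp hQ', Matrix.one_mul, Matrix.mul_one]
    _ = Q * (Qᵀ * P * Q') * Q'ᵀ := by simp only [Matrix.mul_assoc]
    _ = 0 := by rw [h, Matrix.mul_zero, Matrix.zero_mul]

end Matrix

theorem dlnA_symm_posdef_general (d N : ℕ) (hN : 0 < N)
    (QN Q0 : Matrix (Fin d) (Fin d) ℝ) (hQN : QNᵀ * QN = 1) (hQ0 : Q0ᵀ * Q0 = 1)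
    (σ : Fin d → ℝ) (hσ : ∀ i, 0 < σ i) :
    (∀ P R : Matrix (Fin d) (Fin d) ℝ,
        Matrix.trace (Pᵀ * dlnA d N QN Q0 σ R) = Matrix.trace ((dlnA d N QN Q0 σ P)ᵀ * R)) ∧
    (∀ P : Matrix (Fin d) (Fin d) ℝ, P ≠ 0 →
        0 < Matrix.trace (Pᵀ * dlnA d N QN Q0 σ P)) := by
  refine ⟨fun P R => ?_, fun P hP => ?_⟩
  · simp only [dlnA, Matrix.mul_sum, Matrix.transpose_sum, Matrix.sum_mul, trace_sum]
    exact Finset.sum_congr rfl fun p _ => trace_transpose_mul_mul_mul_of_isSymm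
      (isSymm_mul_diagonal_mul_transpose _ _) (isSymm_mul_diagonal_mul_transpose _ _) P R
  · simp only [dlnA, Matrix.mul_sum, trace_sum]
    refine Finset.sum_pos (fun p _ => ?_) (Finset.nonempty_range_iff.mpr hN.ne')
    rw [trace_transpose_mul_conj_diagonal]
    exact trace_transpose_mul_diagonal_mul_mul_diagonal_pos (transpose_mul_mul_ne_zero hQN hQ0 hP)
      (fun i => rpow_pos_of_pos (hσ i) _) (fun i => rpow_pos_of_pos (hσ i) _)

/-- `A_{N,X}` is symmetric and positive definite with respect to the Frobenius inner
product `⟨A,B⟩ = Tr(AᵀB)`, for any invertible `X = Q_N Σ Q_0ᵀ`. -/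
theorem dlnA_symm_posdef (d N : ℕ) (hd : 0 < d) (hN : 0 < N)
    (QN Q0 : Matrix (Fin d) (Fin d) ℝ) (hQN : QNᵀ * QN = 1) (hQ0 : Q0ᵀ * Q0 = 1)
    (σ : Fin d → ℝ) (hσ : ∀ i, 0 < σ i) :
    (∀ P R : Matrix (Fin d) (Fin d) ℝ,
        Matrix.trace (Pᵀ * dlnA d N QN Q0 σ R) = Matrix.trace ((dlnA d N QN Q0 σ P)ᵀ * R)) ∧
    (∀ P : Matrix (Fin d) (Fin d) ℝ, P ≠ 0 →
        0 < Matrix.trace (Pᵀ * dlnA d N QN Q0 σ P)) :=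
  dlnA_symm_posdef_general d N hN QN Q0 hQN hQ0 σ hσ
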